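/- arXiv:1605.06443 — 3 statements merged into one kernel-verified Lean document; each statement's English description precedes it below -/
import Mathlib

section
/- For independent Rademacher random variables ε_1, …, ε_n (each uniform on {−1, +1}) and any vectors a_1, …, a_n ∈ ℝ^c, E[‖Σ_i ε_i a_i‖₂] ≤ ‖a‖ ≤ √2 · E[‖Σ_i ε_i a_i‖₂], where ‖a‖ = (Σ_i ‖a_i‖₂²)^{1/2}; in particular E[|Σ_i ε_i a_i|] ≥ (1/√2)·(Σ_i a_i²)^{1/2} for scalars a_i (Khintchine–Kahane inequality). -/
/-!
Independent signs have the product law, so the expectation is the uniform average over the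
Boolean cube `Fin n → Bool` of `f s = ‖∑ i, sign (s i) • a i‖`. By the parallelogram law the
average of `f ^ 2` is `∑ i, ‖a i‖ ^ 2`, and Cauchy–Schwarz gives the upper bound. For the lower
bound, `f` is even and moves by at most `2 * ‖a i‖` when the `i`-th sign is flipped; for even
functions the Poincaré inequality on the cube holds with twice the usual constant, so the variance
of `f` is at most `(∑ i, ‖a i‖ ^ 2) / 2`, that is `(E f) ^ 2 ≥ E (f ^ 2) / 2`.
-/

open MeasureTheory ProbabilityTheory
open Finset

namespace BooleanCube

variable {n : ℕ}

def sign (b : Bool) : ℝ := if b then 1 else -1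

@[simp] lemma sign_true : sign true = 1 := rfl

@[simp] lemma sign_false : sign false = -1 := rfl

lemma sign_not (b : Bool) : sign (!b) = -sign b := by cases b <;> simp

def flipAt (i : Fin n) (s : Fin n → Bool) : Fin n → Bool := Function.update s i (!s i)

lemma flipAt_cons_zero (b : Bool) (s : Fin n → Bool) :
    flipAt 0 (Fin.cons b s) = Fin.cons (!b) s := by
  rw [flipAt, Fin.cons_zero, Fin.update_cons_zero]

lemma flipAt_cons_succ (i : Fin n) (b : Bool) (s : Fin n → Bool) :
    flipAt i.succ (Fin.cons b s) = Fin.cons b (flipAt i s) := by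
  rw [flipAt, flipAt, Fin.cons_succ, Fin.cons_update]

lemma sum_univ_succ {M : Type*} [AddCommMonoid M] (F : (Fin (n + 1) → Bool) → M) :
    ∑ t, F t = ∑ s : Fin n → Bool, (F (Fin.cons true s) + F (Fin.cons false s)) := by
  rw [← (Fin.consEquiv fun _ => Bool).sum_comp, Fintype.sum_prod_type, Fintype.sum_bool,
    ← sum_add_distrib]
  rfl

lemma sum_eq_zero_of_odd {g : (Fin n → Bool) → ℝ} (hg : ∀ s, g (Bool.not ∘ s) = -g s) :
    ∑ s, g s = 0 := by
  have hinv : Function.Involutive (Bool.not ∘ · : (Fin n → Bool) → Fin n → Bool) :=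
    fun s => by ext; simp
  have h := Equiv.sum_comp hinv.toPerm g
  simp only [Function.Involutive.coe_toPerm, hg, sum_neg_distrib] at h
  linarith

/-- `4 ^ n` times the variance of `f` under the uniform measure, kept free of division. -/
def variance (f : (Fin n → Bool) → ℝ) : ℝ := 2 ^ n * ∑ s, f s ^ 2 - (∑ s, f s) ^ 2

def edgeEnergy (f : (Fin n → Bool) → ℝ) : ℝ := ∑ i, ∑ s, (f s - f (flipAt i s)) ^ 2

lemma edgeEnergy_nonneg (f : (Fin n → Bool) → ℝ) : 0 ≤ edgeEnergy f :=
  sum_nonneg fun _ _ => sum_nonneg fun _ _ => sq_nonneg _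

def pairSum (f : (Fin (n + 1) → Bool) → ℝ) (s : Fin n → Bool) : ℝ :=
  f (Fin.cons true s) + f (Fin.cons false s)

def pairDiff (f : (Fin (n + 1) → Bool) → ℝ) (s : Fin n → Bool) : ℝ :=
  f (Fin.cons true s) - f (Fin.cons false s)

lemma variance_succ (f : (Fin (n + 1) → Bool) → ℝ) :
    variance f = variance (pairSum f) + 2 ^ n * ∑ s, pairDiff f s ^ 2 := by
  have h : ∀ s, 2 * (f (Fin.cons true s) ^ 2 + f (Fin.cons false s) ^ 2) =
      pairSum f s ^ 2 + pairDiff f s ^ 2 := fun s => by simp only [pairSum, pairDiff]; ring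
  rw [variance, variance, sum_univ_succ f, sum_univ_succ (f · ^ 2), pow_succ, mul_assoc, mul_sum,
    sum_congr rfl fun s _ => h s, sum_add_distrib]
  simp only [pairSum]
  ring

lemma edgeEnergy_succ (f : (Fin (n + 1) → Bool) → ℝ) :
    edgeEnergy f = 2 * ∑ s, pairDiff f s ^ 2 +
      (edgeEnergy (fun s => f (Fin.cons true s)) + edgeEnergy (fun s => f (Fin.cons false s))) := by
  rw [edgeEnergy, Fin.sum_univ_succ, sum_univ_succ, mul_sum, edgeEnergy, edgeEnergy,
    ← sum_add_distrib]
  congr 1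
  · refine sum_congr rfl fun s _ => ?_
    simp only [flipAt_cons_zero, Bool.not_true, Bool.not_false, pairDiff]
    ring
  · refine sum_congr rfl fun i _ => ?_
    rw [sum_univ_succ, ← sum_add_distrib]
    simp only [flipAt_cons_succ]

lemma edgeEnergy_add_add_edgeEnergy_sub (u v : (Fin n → Bool) → ℝ) :
    edgeEnergy (fun s => u s + v s) + edgeEnergy (fun s => u s - v s) =
      2 * (edgeEnergy u + edgeEnergy v) := by
  simp only [edgeEnergy, ← sum_add_distrib, mul_sum]
  refine sum_congr rfl fun i _ => sum_congr rfl fun s _ => ?_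
  ring

lemma two_mul_edgeEnergy_succ (f : (Fin (n + 1) → Bool) → ℝ) :
    2 * edgeEnergy f =
      4 * ∑ s, pairDiff f s ^ 2 + (edgeEnergy (pairSum f) + edgeEnergy (pairDiff f)) := by
  have h := edgeEnergy_add_add_edgeEnergy_sub (fun s => f (Fin.cons true s))
    (fun s => f (Fin.cons false s))
  rw [edgeEnergy_succ]
  unfold pairSum pairDiff
  linarith

lemma variance_zero (f : (Fin 0 → Bool) → ℝ) : variance f = 0 := by
  simp [variance]

/-- The Poincaré inequality on the Boolean cube. -/
theorem four_mul_variance_le (f : (Fin n → Bool) → ℝ) : 4 * variance f ≤ 2 ^ n * edgeEnergy f := by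
  induction n with
  | zero => simp [variance_zero, edgeEnergy]
  | succ n ih =>
    have hp := ih (pairSum f)
    have hm := mul_nonneg (pow_nonneg zero_le_two n : (0 : ℝ) ≤ 2 ^ n)
      (edgeEnergy_nonneg (pairDiff f))
    have h := congrArg ((2 : ℝ) ^ n * ·) (two_mul_edgeEnergy_succ f)
    rw [variance_succ, pow_succ]
    linarith

theorem eight_mul_variance_le_of_even {f : (Fin n → Bool) → ℝ}
    (hf : ∀ s, f (Bool.not ∘ s) = f s) : 8 * variance f ≤ 2 ^ n * edgeEnergy f := by
  induction n with
  | zero => simp [variance_zero, edgeEnergy]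
  | succ n ih =>
    have hcons : ∀ b s, f (Fin.cons b (Bool.not ∘ s)) = f (Fin.cons (!b) s) := fun b s => by
      simpa [Fin.comp_cons] using hf (Fin.cons (!b) s)
    have hp := ih (f := pairSum f) fun s => by simp only [pairSum, hcons]; simp [add_comm]
    have hodd : ∀ s, pairDiff f (Bool.not ∘ s) = -pairDiff f s := fun s => by
      simp only [pairDiff, hcons]; simp
    -- `pairDiff f` is odd, so it has mean zero and Poincaré for it supplies the extra factor 2.
    have hm := four_mul_variance_le (pairDiff f)
    rw [variance, sum_eq_zero_of_odd hodd] at hm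
    have h := congrArg ((2 : ℝ) ^ n * ·) (two_mul_edgeEnergy_succ f)
    rw [variance_succ, pow_succ]
    linarith

section SignedSum

variable {E : Type*} [AddCommGroup E] [Module ℝ E]

def signedSum (a : Fin n → E) (s : Fin n → Bool) : E := ∑ i, sign (s i) • a i

lemma signedSum_cons (a : Fin (n + 1) → E) (b : Bool) (s : Fin n → Bool) :
    signedSum a (Fin.cons b s) = sign b • a 0 + signedSum (Fin.tail a) s := by
  simp only [signedSum, Fin.sum_univ_succ, Fin.cons_zero, Fin.cons_succ, Fin.tail]

lemma signedSum_not (a : Fin n → E) (s : Fin n → Bool) :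
    signedSum a (Bool.not ∘ s) = -signedSum a s := by
  simp only [signedSum, Function.comp_apply, sign_not, neg_smul, sum_neg_distrib]

lemma signedSum_sub_signedSum_flipAt (a : Fin n → E) (i : Fin n) (s : Fin n → Bool) :
    signedSum a s - signedSum a (flipAt i s) = (2 * sign (s i)) • a i := by
  rw [signedSum, signedSum, ← sum_sub_distrib, sum_eq_single i]
  · rw [flipAt, Function.update_self, sign_not, ← sub_smul]
    ring_nf
  · intro j _ hj
    rw [flipAt, Function.update_of_ne hj, sub_self]
  · simp

end SignedSum

section NormSignedSum

variable {E : Type*} [NormedAddCommGroup E] [InnerProductSpace ℝ E]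

lemma sum_norm_signedSum_sq (a : Fin n → E) :
    ∑ s, ‖signedSum a s‖ ^ 2 = 2 ^ n * ∑ i, ‖a i‖ ^ 2 := by
  induction n with
  | zero => simp [signedSum]
  | succ n ih =>
    have parallelogram : ∀ s, ‖signedSum a (Fin.cons true s)‖ ^ 2 +
        ‖signedSum a (Fin.cons false s)‖ ^ 2 =
          2 * (‖a 0‖ ^ 2 + ‖signedSum (Fin.tail a) s‖ ^ 2) := by
      intro s
      rw [signedSum_cons, signedSum_cons, sign_true, sign_false, one_smul, neg_one_smul,
        neg_add_eq_sub, norm_sub_rev]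
      have := parallelogram_law_with_norm ℝ (a 0) (signedSum (Fin.tail a) s)
      simp only [sq]
      linarith
    rw [sum_univ_succ, sum_congr rfl fun s _ => parallelogram s, ← mul_sum, sum_add_distrib, ih,
      Fin.sum_univ_succ]
    simp only [sum_const, card_univ, Fintype.card_pi, Fintype.card_bool, prod_const,
      Fintype.card_fin, nsmul_eq_mul, Nat.cast_pow, Nat.cast_ofNat, Fin.tail]
    ring

lemma edgeEnergy_norm_signedSum_le (a : Fin n → E) :
    edgeEnergy (‖signedSum a ·‖) ≤ 2 ^ n * (4 * ∑ i, ‖a i‖ ^ 2) := by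
  have lipschitz : ∀ i s, (‖signedSum a s‖ - ‖signedSum a (flipAt i s)‖) ^ 2 ≤ (2 * ‖a i‖) ^ 2 := by
    intro i s
    have h : |‖signedSum a s‖ - ‖signedSum a (flipAt i s)‖| ≤ 2 * ‖a i‖ :=
      calc _ ≤ ‖signedSum a s - signedSum a (flipAt i s)‖ := abs_norm_sub_norm_le _ _
        _ = 2 * ‖a i‖ := by rw [signedSum_sub_signedSum_flipAt, norm_smul]; cases s i <;> simp
    simpa only [sq_abs] using pow_le_pow_left₀ (abs_nonneg _) h 2
  calc edgeEnergy (‖signedSum a ·‖) ≤ ∑ i, ∑ _s : Fin n → Bool, (2 * ‖a i‖) ^ 2 :=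
        sum_le_sum fun i _ => sum_le_sum fun s _ => lipschitz i s
    _ = 2 ^ n * (4 * ∑ i, ‖a i‖ ^ 2) := by norm_num [mul_sum, mul_pow]

lemma sq_sum_norm_signedSum_le (a : Fin n → E) :
    (∑ s, ‖signedSum a s‖) ^ 2 ≤ 2 ^ n * (2 ^ n * ∑ i, ‖a i‖ ^ 2) := by
  simpa [sum_norm_signedSum_sq] using
    sq_sum_le_card_mul_sum_sq (s := univ) (f := (‖signedSum a ·‖))

lemma le_two_mul_sq_sum_norm_signedSum (a : Fin n → E) :
    2 ^ n * (2 ^ n * ∑ i, ‖a i‖ ^ 2) ≤ 2 * (∑ s, ‖signedSum a s‖) ^ 2 := by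
  have poincare := eight_mul_variance_le_of_even (f := (‖signedSum a ·‖))
    fun s => by rw [signedSum_not, norm_neg]
  have hedge := mul_le_mul_of_nonneg_left (edgeEnergy_norm_signedSum_le a)
    (pow_nonneg zero_le_two n : (0 : ℝ) ≤ 2 ^ n)
  simp only [variance, sum_norm_signedSum_sq] at poincare
  linarith

theorem average_norm_signedSum_le_sqrt (a : Fin n → E) :
    (2 ^ n : ℝ)⁻¹ * ∑ s, ‖signedSum a s‖ ≤ √(∑ i, ‖a i‖ ^ 2) := by
  rw [Real.le_sqrt (by positivity) (by positivity), mul_pow, inv_pow,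
    inv_mul_le_iff₀ (by positivity)]
  linarith [sq_sum_norm_signedSum_le a]

theorem sqrt_le_sqrt_two_mul_average_norm_signedSum (a : Fin n → E) :
    √(∑ i, ‖a i‖ ^ 2) ≤ √2 * ((2 ^ n : ℝ)⁻¹ * ∑ s, ‖signedSum a s‖) := by
  rw [Real.sqrt_le_left (by positivity), mul_pow, Real.sq_sqrt zero_le_two, mul_pow, inv_pow,
    ← mul_assoc, mul_comm 2, mul_assoc, le_inv_mul_iff₀ (by positivity)]
  linarith [le_two_mul_sq_sum_norm_signedSum a]

end NormSignedSum

section Rademacher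

open scoped ENNReal

variable {Ω : Type*} [MeasurableSpace Ω] {μ : Measure Ω}

noncomputable def uniformBool : Measure Bool :=
  (2⁻¹ : ℝ≥0∞) • (Measure.dirac true + Measure.dirac false)

instance : IsProbabilityMeasure uniformBool :=
  ⟨by simp [uniformBool, ENNReal.inv_two_add_inv_two]⟩

lemma uniformBool_singleton (b : Bool) : uniformBool {b} = 2⁻¹ := by
  cases b <;> simp [uniformBool]

lemma measurable_sign : Measurable sign := measurable_of_countable _

lemma map_sign_uniformBool :
    uniformBool.map sign = (2⁻¹ : ℝ≥0∞) • (Measure.dirac 1 + Measure.dirac (-1)) := by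
  simp [uniformBool, Measure.map_smul, Measure.map_add _ _ measurable_sign,
    Measure.map_dirac' measurable_sign]

lemma map_eq_map_sign_uniformBool [IsProbabilityMeasure μ] {e : Ω → ℝ} (he : Measurable e)
    (h1 : μ {ω | e ω = 1} = 1 / 2) (h2 : μ {ω | e ω = -1} = 1 / 2) :
    μ.map e = uniformBool.map sign := by
  have hdisj : Disjoint ({1} : Set ℝ) {-1} := by norm_num
  have := Measure.isProbabilityMeasure_map (μ := μ) he.aemeasurable
  have hsupp : ∀ᵐ x ∂μ.map e, x ∈ ({1} ∪ {-1} : Set ℝ) := by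
    rw [ae_iff_measure_eq (by measurability), Set.ofPred_mem_eq,
      measure_union hdisj (measurableSet_singleton _),
      Measure.map_apply he (measurableSet_singleton _),
      Measure.map_apply he (measurableSet_singleton _), measure_univ]
    exact (congrArg₂ (· + ·) h1 h2).trans (ENNReal.add_halves 1)
  rw [map_sign_uniformBool, ← Measure.restrict_eq_self_of_ae_mem hsupp,
    Measure.restrict_union hdisj (measurableSet_singleton _), Measure.restrict_singleton,
    Measure.restrict_singleton, Measure.map_apply he (measurableSet_singleton _),
    Measure.map_apply he (measurableSet_singleton _), smul_add]
  simp only [Set.preimage, Set.mem_singleton_iff, h1, h2, one_div]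

variable {n : ℕ} {ε : Fin n → Ω → ℝ}

lemma map_eq_map_sign_pi_uniformBool (hmeas : ∀ i, Measurable (ε i)) (hindep : iIndepFun ε μ)
    (hlaw : ∀ i, μ {ω | ε i ω = 1} = 1 / 2 ∧ μ {ω | ε i ω = -1} = 1 / 2) :
    μ.map (fun ω i => ε i ω) =
      (Measure.pi fun _ : Fin n => uniformBool).map (fun s i => sign (s i)) := by
  have := hindep.isProbabilityMeasure
  rw [hindep.map_fun_eq_pi_map fun i => (hmeas i).aemeasurable,
    Measure.pi_map_pi fun _ => measurable_sign.aemeasurable]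
  congr with i : 1
  exact map_eq_map_sign_uniformBool (hmeas i) (hlaw i).1 (hlaw i).2

lemma pi_uniformBool_real_singleton (s : Fin n → Bool) :
    (Measure.pi fun _ : Fin n => uniformBool).real {s} = (2 ^ n : ℝ)⁻¹ := by
  rw [measureReal_def, ← Set.univ_pi_singleton, Measure.pi_pi]
  simp [uniformBool_singleton, ENNReal.toReal_inv]

theorem integral_comp_eq_average_sign {F : Type*} [NormedAddCommGroup F] [NormedSpace ℝ F]
    [CompleteSpace F]
    (hmeas : ∀ i, Measurable (ε i)) (hindep : iIndepFun ε μ)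
    (hlaw : ∀ i, μ {ω | ε i ω = 1} = 1 / 2 ∧ μ {ω | ε i ω = -1} = 1 / 2)
    {f : (Fin n → ℝ) → F} (hf : Continuous f) :
    ∫ ω, f (fun i => ε i ω) ∂μ = (2 ^ n : ℝ)⁻¹ • ∑ s : Fin n → Bool, f (fun i => sign (s i)) := by
  have hsign : Measurable fun (s : Fin n → Bool) i => sign (s i) :=
    measurable_pi_lambda _ fun i => measurable_sign.comp (measurable_pi_apply i)
  rw [← integral_map (measurable_pi_lambda _ hmeas).aemeasurable hf.aestronglyMeasurable,
    map_eq_map_sign_pi_uniformBool hmeas hindep hlaw,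
    integral_map hsign.aemeasurable hf.aestronglyMeasurable, integral_fintype Integrable.of_finite,
    smul_sum]
  simp only [pi_uniformBool_real_singleton]

theorem integral_norm_sum_smul_eq_average {E : Type*} [NormedAddCommGroup E] [NormedSpace ℝ E]
    (hmeas : ∀ i, Measurable (ε i)) (hindep : iIndepFun ε μ)
    (hlaw : ∀ i, μ {ω | ε i ω = 1} = 1 / 2 ∧ μ {ω | ε i ω = -1} = 1 / 2) (a : Fin n → E) :
    ∫ ω, ‖∑ i, ε i ω • a i‖ ∂μ = (2 ^ n : ℝ)⁻¹ * ∑ s, ‖signedSum a s‖ :=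
  integral_comp_eq_average_sign hmeas hindep hlaw (f := fun x => ‖∑ i, x i • a i‖) (by fun_prop)

end Rademacher

end BooleanCube

open BooleanCube in
theorem khintchine_kahane_general
    {Ω : Type*} [MeasurableSpace Ω] (μ : Measure Ω)
    (n c : ℕ) (ε : Fin n → Ω → ℝ)
    (hmeas : ∀ i, Measurable (ε i))
    (hindep : iIndepFun ε μ)
    (hlaw : ∀ i, μ {ω | ε i ω = 1} = 1/2 ∧ μ {ω | ε i ω = -1} = 1/2)
    (a : Fin n → EuclideanSpace ℝ (Fin c)) (b : Fin n → ℝ) :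
    (∫ ω, ‖∑ i, ε i ω • a i‖ ∂μ) ≤ Real.sqrt (∑ i, ‖a i‖ ^ 2) ∧
    Real.sqrt (∑ i, ‖a i‖ ^ 2) ≤ Real.sqrt 2 * ∫ ω, ‖∑ i, ε i ω • a i‖ ∂μ ∧
    (1 / Real.sqrt 2) * Real.sqrt (∑ i, (b i) ^ 2) ≤
      ∫ ω, |∑ i, ε i ω * b i| ∂μ := by
  have hb : ∫ ω, |∑ i, ε i ω * b i| ∂μ = ∫ ω, ‖∑ i, ε i ω • b i‖ ∂μ := by
    simp only [smul_eq_mul, Real.norm_eq_abs]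
  have hb2 : ∑ i, b i ^ 2 = ∑ i, ‖b i‖ ^ 2 := by simp only [Real.norm_eq_abs, sq_abs]
  rw [hb, hb2, integral_norm_sum_smul_eq_average hmeas hindep hlaw,
    integral_norm_sum_smul_eq_average hmeas hindep hlaw]
  refine ⟨average_norm_signedSum_le_sqrt a, sqrt_le_sqrt_two_mul_average_norm_signedSum a, ?_⟩
  rw [one_div, inv_mul_le_iff₀ (by positivity)]
  exact sqrt_le_sqrt_two_mul_average_norm_signedSum b

theorem khintchine_kahane
    {Ω : Type*} [MeasurableSpace Ω] (μ : Measure Ω) [IsProbabilityMeasure μ]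
    (n c : ℕ) (ε : Fin n → Ω → ℝ)
    (hmeas : ∀ i, Measurable (ε i))
    (hindep : iIndepFun ε μ)
    (hlaw : ∀ i, μ {ω | ε i ω = 1} = 1/2 ∧ μ {ω | ε i ω = -1} = 1/2)
    (a : Fin n → EuclideanSpace ℝ (Fin c)) (b : Fin n → ℝ) :
    (∫ ω, ‖∑ i, ε i ω • a i‖ ∂μ) ≤ Real.sqrt (∑ i, ‖a i‖ ^ 2) ∧
    Real.sqrt (∑ i, ‖a i‖ ^ 2) ≤ Real.sqrt 2 * ∫ ω, ‖∑ i, ε i ω • a i‖ ∂μ ∧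
    (1 / Real.sqrt 2) * Real.sqrt (∑ i, (b i) ^ 2) ≤
      ∫ ω, |∑ i, ε i ω * b i| ∂μ :=
  khintchine_kahane_general μ n c ε hmeas hindep hlaw a b
end

section
/- Let h, h̃ : F × Y → ℝ be functions on a finite index set F and finite label set Y, and for each f ∈ F let Y_f ⊆ Y be nonempty. Then |max_{y : F → Y, y(f) ∈ Y_f} Σ_{f ∈ F} h(f, y(f)) − max_{y} Σ_{f ∈ F} h̃(f, y(f))| ≤ √|F| · √(Σ_{f ∈ F} Σ_{y ∈ Y_f} (h(f, y) − h̃(f, y))²). -/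
/-!
By Cauchy–Schwarz, for each admissible assignment `y` the two objectives differ by at most
`√|F| · √(∑_f (h - h̃)(f, y f)²)`, and the sum inside the root only grows when each term is
replaced by the sum over all of `Y_f`. A maximum over a finite set moves by at most the
largest pointwise change.
-/

open Finset

theorem ciSup_le_ciSup_add {ι : Type*} [Nonempty ι] {u v : ι → ℝ} {c : ℝ}
    (hv : BddAbove (Set.range v)) (h : ∀ i, u i ≤ v i + c) :
    ⨆ i, u i ≤ (⨆ i, v i) + c :=
  ciSup_le fun i => (h i).trans (add_le_add_left (le_ciSup hv i) c)

theorem abs_ciSup_sub_ciSup_le {ι : Type*} [Finite ι] [Nonempty ι] {u v : ι → ℝ} {c : ℝ}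
    (h : ∀ i, |u i - v i| ≤ c) : |(⨆ i, u i) - ⨆ i, v i| ≤ c := by
  rw [abs_sub_le_iff, sub_le_iff_le_add, sub_le_iff_le_add]
  constructor
  · refine add_comm c _ ▸ ciSup_le_ciSup_add (Set.finite_range v).bddAbove fun i => ?_
    linarith [(abs_le.mp (h i)).2]
  · refine add_comm c _ ▸ ciSup_le_ciSup_add (Set.finite_range u).bddAbove fun i => ?_
    linarith [(abs_le.mp (h i)).1]

theorem abs_sum_le_sqrt_card_mul_sqrt_sum_sq {ι : Type*} (s : Finset ι) (g : ι → ℝ) :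
    |∑ i ∈ s, g i| ≤ Real.sqrt #s * Real.sqrt (∑ i ∈ s, g i ^ 2) := by
  rw [← Real.sqrt_mul (Nat.cast_nonneg _)]
  exact Real.abs_le_sqrt (sq_sum_le_card_mul_sum_sq (s := s) (f := g))

open Classical in
theorem max_assignment_lipschitz_general {F Y : Type*} [Fintype F]
    (Yf : F → Finset Y)
    [Nonempty {y : F → Y // ∀ f, y f ∈ Yf f}]
    (h htil : F → Y → ℝ) :
    |(⨆ y : {y : F → Y // ∀ f, y f ∈ Yf f}, ∑ f, h f (y.1 f)) -
      (⨆ y : {y : F → Y // ∀ f, y f ∈ Yf f}, ∑ f, htil f (y.1 f))| ≤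
    Real.sqrt (Fintype.card F) *
      Real.sqrt (∑ f, ∑ y ∈ Yf f, (h f y - htil f y) ^ 2) := by
  have : Finite {y : F → Y // ∀ f, y f ∈ Yf f} :=
    Finite.of_injective (fun y f => (⟨y.1 f, y.2 f⟩ : Yf f)) fun y y' hyy' =>
      Subtype.ext <| funext fun f => congrArg Subtype.val (congrFun hyy' f)
  refine abs_ciSup_sub_ciSup_le fun y => ?_
  calc |∑ f, h f (y.1 f) - ∑ f, htil f (y.1 f)|
      = |∑ f, (h f (y.1 f) - htil f (y.1 f))| := by rw [sum_sub_distrib]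
    _ ≤ Real.sqrt (Fintype.card F) * Real.sqrt (∑ f, (h f (y.1 f) - htil f (y.1 f)) ^ 2) :=
        abs_sum_le_sqrt_card_mul_sqrt_sum_sq univ _
    _ ≤ Real.sqrt (Fintype.card F) *
          Real.sqrt (∑ f, ∑ y ∈ Yf f, (h f y - htil f y) ^ 2) := by
        gcongr with f
        exact single_le_sum (fun z _ => sq_nonneg (h f z - htil f z)) (y.2 f)

open Classical in
theorem max_assignment_lipschitz {F Y : Type*} [Fintype F] [Fintype Y]
    (Yf : F → Finset Y) (hYf : ∀ f, (Yf f).Nonempty)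
    [Nonempty {y : F → Y // ∀ f, y f ∈ Yf f}]
    (h htil : F → Y → ℝ) :
    |(⨆ y : {y : F → Y // ∀ f, y f ∈ Yf f}, ∑ f, h f (y.1 f)) -
      (⨆ y : {y : F → Y // ∀ f, y f ∈ Yf f}, ∑ f, htil f (y.1 f))| ≤
    Real.sqrt (Fintype.card F) *
      Real.sqrt (∑ f, ∑ y ∈ Yf f, (h f y - htil f y) ^ 2) :=
  max_assignment_lipschitz_general Yf h htil
end

section
/- Let L : Y × Y → ℝ≥0 with L bounded by M, h, h̃ : Y → ℝ, ρ > 0, and y ∈ Y a finite set with |Y| ≥ 2. Then |max_{y' ≠ y} L(y', y)·(1 − (h(y) − h(y'))/ρ) − max_{y' ≠ y} L(y', y)·(1 − (h̃(y) − h̃(y'))/ρ)| ≤ (2M/ρ)·max_{y'' ∈ Y} |h(y'') − h̃(y'')|. -/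
section

variable {ι α : Type*} [AddCommGroup α] [LinearOrder α] [IsOrderedAddMonoid α]
  {s : Finset ι} {f g : ι → α} {c : α}

theorem Finset.sup'_le_add_sup' (hs : s.Nonempty) (hfg : ∀ i ∈ s, f i ≤ c + g i) :
    s.sup' hs f ≤ c + s.sup' hs g :=
  Finset.sup'_le _ _ fun i hi => (hfg i hi).trans (add_le_add_right (Finset.le_sup' g hi) c)

theorem Finset.abs_sup'_sub_sup'_le (hs : s.Nonempty) (hfg : ∀ i ∈ s, |f i - g i| ≤ c) :
    |s.sup' hs f - s.sup' hs g| ≤ c := by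
  rw [abs_sub_le_iff, sub_le_iff_le_add, sub_le_iff_le_add]
  exact ⟨Finset.sup'_le_add_sup' hs fun i hi => sub_le_iff_le_add.1 (abs_sub_le_iff.1 (hfg i hi)).1,
    Finset.sup'_le_add_sup' hs fun i hi => sub_le_iff_le_add.1 (abs_sub_le_iff.1 (hfg i hi)).2⟩

end

theorem abs_mul_one_sub_div_sub_le {l M ρ a b a' b' S : ℝ} (hρ : 0 < ρ)
    (hl : l ∈ Set.Icc 0 M) (ha : |a - a'| ≤ S) (hb : |b - b'| ≤ S) :
    |l * (1 - (a - b) / ρ) - l * (1 - (a' - b') / ρ)| ≤ 2 * M / ρ * S := by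
  have hdiff : l * (1 - (a - b) / ρ) - l * (1 - (a' - b') / ρ)
      = l * ((b - b') - (a - a')) / ρ := by
    field_simp; ring
  have hsum : |(b - b') - (a - a')| ≤ 2 * S := by
    linarith [abs_sub (b - b') (a - a')]
  rw [hdiff, abs_div, abs_mul, abs_of_nonneg hl.1, abs_of_pos hρ,
    show 2 * M / ρ * S = M * (2 * S) / ρ by ring]
  gcongr
  · exact hl.1.trans hl.2
  · exact hl.2

open Classical in
theorem multiplicative_margin_lipschitz_general {Y : Type*} [Fintype Y]
    (M ρ : ℝ) (hρ : 0 < ρ)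
    (L : Y → Y → ℝ) (hL : ∀ y₁ y₂, L y₁ y₂ ∈ Set.Icc (0 : ℝ) M)
    (h htil : Y → ℝ) (y : Y)
    (hne : (Finset.univ.filter (fun y' : Y => y' ≠ y)).Nonempty) :
    |(Finset.univ.filter (fun y' : Y => y' ≠ y)).sup' hne
        (fun y' => L y' y * (1 - (h y - h y') / ρ)) -
      (Finset.univ.filter (fun y' : Y => y' ≠ y)).sup' hne
        (fun y' => L y' y * (1 - (htil y - htil y') / ρ))| ≤
      (2 * M / ρ) * Finset.univ.sup' ⟨y, Finset.mem_univ y⟩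
        (fun y'' => |h y'' - htil y''|) := by
  refine Finset.abs_sup'_sub_sup'_le hne fun y' _ => ?_
  exact abs_mul_one_sub_div_sub_le hρ (hL y' y)
    (Finset.le_sup' (fun y'' => |h y'' - htil y''|) (Finset.mem_univ y))
    (Finset.le_sup' (fun y'' => |h y'' - htil y''|) (Finset.mem_univ y'))

open Classical in
theorem multiplicative_margin_lipschitz {Y : Type*} [Fintype Y]
    (hcard : 2 ≤ Fintype.card Y)
    (M ρ : ℝ) (hρ : 0 < ρ)
    (L : Y → Y → ℝ) (hL : ∀ y₁ y₂, L y₁ y₂ ∈ Set.Icc (0 : ℝ) M)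
    (h htil : Y → ℝ) (y : Y)
    (hne : (Finset.univ.filter (fun y' : Y => y' ≠ y)).Nonempty) :
    |(Finset.univ.filter (fun y' : Y => y' ≠ y)).sup' hne
        (fun y' => L y' y * (1 - (h y - h y') / ρ)) -
      (Finset.univ.filter (fun y' : Y => y' ≠ y)).sup' hne
        (fun y' => L y' y * (1 - (htil y - htil y') / ρ))| ≤
      (2 * M / ρ) * Finset.univ.sup' ⟨y, Finset.mem_univ y⟩
        (fun y'' => |h y'' - htil y''|) :=
  multiplicative_margin_lipschitz_general M ρ hρ L hL h htil y hne
end
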